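/- arXiv:2512.02211 — 3 statements merged into one kernel-verified Lean document; each statement's English description precedes it below -/
import Mathlib

section
/- Let G be a finite group and g, h elements of G not in Z(G). Then C_G(g) = C_G(h) if and only if Z(C_G(g)) = Z(C_G(h)). -/
variable {G : Type*} [Group G] [Fintype G]

/-- The centralizer of an element `g` of `G`. -/
def centG (g : G) : Subgroup G := Subgroup.centralizer ({g} : Set G)

/-- `Z(g) = Z(C_G(g))`, the center of the centralizer of `g`, as a subgroup of `G`. -/
def zCent (g : G) : Subgroup G :=
  (Subgroup.center ↥(Subgroup.centralizer ({g} : Set G))).map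
    (Subgroup.centralizer ({g} : Set G)).subtype

lemma mem_zCent_iff (g x : G) :
    x ∈ zCent g ↔ x ∈ centG g ∧ ∀ y ∈ centG g, y * x = x * y := by
  constructor
  · rintro ⟨⟨z, hz⟩, hc, rfl⟩
    refine ⟨hz, fun y hy => ?_⟩
    have := (Subgroup.mem_center_iff.mp hc) ⟨y, hy⟩
    exact congrArg Subtype.val this
  · rintro ⟨hx, hc⟩
    refine ⟨⟨x, hx⟩, Subgroup.mem_center_iff.mpr fun ⟨y, hy⟩ => ?_, rfl⟩
    exact Subtype.ext (hc y hy)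

lemma self_mem_zCent (g : G) : g ∈ zCent g := by
  rw [mem_zCent_iff]
  refine ⟨Subgroup.mem_centralizer_singleton_iff.mpr rfl, fun y hy => ?_⟩
  exact Subgroup.mem_centralizer_singleton_iff.mp hy

theorem stmt_5 (g h : G) (hg : g ∉ Subgroup.center G) (hh : h ∉ Subgroup.center G) :
    centG g = centG h ↔ zCent g = zCent h := by
  constructor
  · intro e
    ext x
    rw [mem_zCent_iff, mem_zCent_iff, e]
  · intro e
    have hg' := (mem_zCent_iff h g).mp (e ▸ self_mem_zCent g)
    have hh' := (mem_zCent_iff g h).mp (e ▸ self_mem_zCent h)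
    apply le_antisymm
    · intro x hx
      exact Subgroup.mem_centralizer_singleton_iff.mpr (hh'.2 x hx)
    · intro x hx
      exact Subgroup.mem_centralizer_singleton_iff.mpr (hg'.2 x hx)
end

section
/- Let G be a finite nonabelian group. A subset of 𝒵(G) = {Z(C_G(g)) : g ∈ G \ Z(G)} has union equal to G if and only if it contains every maximal element of 𝒵(G); in particular the set of maximal elements of 𝒵(G) is an irredundant cover of G (removing any member destroys the covering property). -/
/-!
Since `Z(C_G(g)) = C_G(C_G(g))`, an element `x ∈ Z(C_G(k))` satisfies `C_G(k) ≤ C_G(x)` and hence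
`Z(C_G(x)) ≤ Z(C_G(k))`. So if `Z(C_G(g))` is maximal in `𝒵(G)`, it is the only member of `𝒵(G)`
containing `g`: any cover drawn from `𝒵(G)` must contain it. Conversely, every element lies in
some member of `𝒵(G)` (central ones in all of them), hence in a maximal one.
-/

variable {G : Type*} [Group G] [Fintype G]

/-- `𝒵(G)`: the set of centers of centralizers of noncentral elements. -/
def zSet (G : Type*) [Group G] [Fintype G] : Set (Subgroup G) :=
  {H | ∃ g : G, g ∉ Subgroup.center G ∧ H = zCent g}

/-- The maximal elements of `𝒵(G)` under inclusion. -/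
def zMax (G : Type*) [Group G] [Fintype G] : Set (Subgroup G) :=
  {H ∈ zSet G | ∀ K ∈ zSet G, H ≤ K → H = K}

namespace Subgroup

theorem map_subtype_center {G : Type*} [Group G] (H : Subgroup G) :
    (center H).map H.subtype = H ⊓ centralizer (H : Set G) := by
  ext x
  constructor
  · rintro ⟨y, hy, rfl⟩
    exact ⟨y.2, fun c hc ↦ congrArg Subtype.val (mem_center_iff.mp hy ⟨c, hc⟩)⟩
  · rintro ⟨hxH, hx⟩
    exact ⟨⟨x, hxH⟩, mem_center_iff.mpr fun c ↦ Subtype.ext (hx c c.2), rfl⟩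

end Subgroup

open Subgroup

theorem zCent_eq_centralizer_centralizer {G : Type*} [Group G] (g : G) :
    zCent g = centralizer (centralizer ({g} : Set G) : Set G) := by
  rw [zCent, map_subtype_center, inf_eq_right]
  exact centralizer_le (Set.singleton_subset_iff.mpr (mem_centralizer_singleton_iff.mpr rfl))

theorem mem_zCent_self {G : Type*} [Group G] (g : G) : g ∈ zCent g := by
  rw [zCent_eq_centralizer_centralizer]
  exact closure_le_centralizer_centralizer _ (subset_closure rfl)

theorem center_le_zCent {G : Type*} [Group G] (g : G) : center G ≤ zCent g := by
  rw [zCent_eq_centralizer_centralizer]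
  exact center_le_centralizer _

theorem zCent_le_of_mem {G : Type*} [Group G] {x g : G} (hx : x ∈ zCent g) :
    zCent x ≤ zCent g := by
  simp only [zCent_eq_centralizer_centralizer] at hx ⊢
  have hCg : centralizer ({g} : Set G) ≤ centralizer {x} := fun c hc ↦
    mem_centralizer_singleton_iff.mpr (mem_centralizer_iff.mp hx c hc)
  exact centralizer_le hCg

theorem mem_zMax_iff {H : Subgroup G} : H ∈ zMax G ↔ Maximal (· ∈ zSet G) H :=
  and_congr_right fun _ ↦ forall₂_congr fun _ _ ↦
    ⟨fun h hle ↦ (h hle).ge, fun h hle ↦ le_antisymm hle (h hle)⟩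

theorem exists_mem_zSet (hna : ∃ a b : G, a * b ≠ b * a) (x : G) : ∃ H ∈ zSet G, x ∈ H := by
  by_cases hx : x ∈ center G
  · obtain ⟨a, b, hab⟩ := hna
    have ha : a ∉ center G := fun h ↦ hab (mem_center_iff.mp h b).symm
    exact ⟨zCent a, ⟨a, ha, rfl⟩, center_le_zCent a hx⟩
  · exact ⟨zCent x, ⟨x, hx, rfl⟩, mem_zCent_self x⟩

theorem exists_zMax_ge {H : Subgroup G} (hH : H ∈ zSet G) : ∃ K ∈ zMax G, H ≤ K := by
  have hfin : (zSet G).Finite := (Set.finite_range zCent).subset fun _ ⟨g, _, hg⟩ ↦ ⟨g, hg.symm⟩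
  obtain ⟨K, hHK, hK⟩ := hfin.exists_le_maximal hH
  exact ⟨K, mem_zMax_iff.mpr hK, hHK⟩

theorem exists_mem_zMax (hna : ∃ a b : G, a * b ≠ b * a) (x : G) : ∃ H ∈ zMax G, x ∈ H := by
  obtain ⟨H, hH, hxH⟩ := exists_mem_zSet hna x
  obtain ⟨K, hK, hHK⟩ := exists_zMax_ge hH
  exact ⟨K, hK, hHK hxH⟩

theorem exists_mem_forall_mem_zSet_eq {H : Subgroup G} (hH : H ∈ zMax G) :
    ∃ g ∈ H, ∀ K ∈ zSet G, g ∈ K → K = H := by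
  obtain ⟨⟨g, -, rfl⟩, hmax⟩ := hH
  refine ⟨g, mem_zCent_self g, fun K hK hgK ↦ ?_⟩
  obtain ⟨k, hk, rfl⟩ := hK
  exact (hmax _ ⟨k, hk, rfl⟩ (zCent_le_of_mem hgK)).symm

theorem covers_iff_zMax_subset (hna : ∃ a b : G, a * b ≠ b * a) {S : Set (Subgroup G)}
    (hS : S ⊆ zSet G) : (∀ x : G, ∃ H ∈ S, x ∈ H) ↔ zMax G ⊆ S := by
  refine ⟨fun hcov H hH ↦ ?_, fun hsub x ↦ ?_⟩
  · obtain ⟨g, -, honly⟩ := exists_mem_forall_mem_zSet_eq hH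
    obtain ⟨K, hKS, hgK⟩ := hcov g
    exact honly K (hS hKS) hgK ▸ hKS
  · obtain ⟨H, hH, hxH⟩ := exists_mem_zMax hna x
    exact ⟨H, hsub hH, hxH⟩

theorem stmt_12 (hna : ∃ a b : G, a * b ≠ b * a) :
    (∀ S : Set (Subgroup G), S ⊆ zSet G →
        ((∀ x : G, ∃ H ∈ S, x ∈ H) ↔ zMax G ⊆ S)) ∧
    (∀ x : G, ∃ H ∈ zMax G, x ∈ H) ∧
    (∀ H ∈ zMax G, ¬ ∀ x : G, ∃ K ∈ zMax G \ {H}, x ∈ K) := by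
  refine ⟨fun S ↦ covers_iff_zMax_subset hna, exists_mem_zMax hna, fun H hH hcov ↦ ?_⟩
  have hsub : zMax G \ {H} ⊆ zSet G := Set.sdiff_subset.trans fun _ hK ↦ hK.1
  exact ((covers_iff_zMax_subset hna hsub).mp hcov hH).2 rfl
end

section
/- Let G be a finite nonabelian group and g ∈ G \ Z(G). Then C_G(g) is maximal (under inclusion) in {C_G(x) : x ∈ G \ Z(G)} if and only if Z(C_G(g)) \ Z(G) = {h ∈ G \ Z(G) : C_G(h) = C_G(g)}. -/
variable {G : Type*} [Group G] [Fintype G]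

lemma mem_zCent {g x : G} : x ∈ zCent g ↔ centG g ≤ centG x := by
  constructor
  · rintro ⟨⟨y, hy⟩, hyc, rfl⟩
    intro c hc
    rw [centG, Subgroup.mem_centralizer_singleton_iff]
    have := Subgroup.mem_center_iff.mp hyc ⟨c, hc⟩
    simpa [Subtype.ext_iff] using this
  · intro h
    have hxg : x ∈ Subgroup.centralizer ({g} : Set G) := by
      rw [Subgroup.mem_centralizer_singleton_iff]
      have hgg : g ∈ centG g := by
        rw [centG, Subgroup.mem_centralizer_singleton_iff]
      have := h hgg
      rw [centG, Subgroup.mem_centralizer_singleton_iff] at this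
      exact this.symm
    exact ⟨⟨x, hxg⟩, Subgroup.mem_center_iff.mpr (fun c => Subtype.ext
      (Subgroup.mem_centralizer_singleton_iff.mp (h c.2))), rfl⟩

theorem stmt_17 (hna : ∃ a b : G, a * b ≠ b * a) (g : G) (hg : g ∉ Subgroup.center G) :
    (∀ x : G, x ∉ Subgroup.center G → centG g ≤ centG x → centG g = centG x) ↔
      (zCent g : Set G) \ (Subgroup.center G : Set G) =
        {h : G | h ∉ Subgroup.center G ∧ centG h = centG g} := by
  constructor
  · intro H
    ext h
    simp only [Set.mem_diff, SetLike.mem_coe, Set.mem_setOf_eq]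
    constructor
    · rintro ⟨hzc, hnz⟩
      exact ⟨hnz, (H h hnz (mem_zCent.mp hzc)).symm⟩
    · rintro ⟨hnz, heq⟩
      exact ⟨mem_zCent.mpr heq.ge, hnz⟩
  · intro H x hx hle
    have : x ∈ (zCent g : Set G) \ (Subgroup.center G : Set G) :=
      ⟨mem_zCent.mpr hle, hx⟩
    rw [H] at this
    exact this.2.symm
end
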